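/- Fix x₁, x₂ ∈ ℝ^d with |x₁ - x₂| ≥ ε₀ > ε > 0, and fix v₁ ∈ ℝ^d. The set of velocities v₂ ∈ ℝ^d such that there exists s > 0 with |x₁ - x₂ - s(v₁ - v₂)| ≤ ε is contained in the set v₁ + K, where K is the cone of directions w ∈ ℝ^d \ {0} with angle to (x₁ - x₂) at most arcsin(ε/ε₀) (i.e., the cone {w : ∃ s > 0, |x₁ - x₂ - s w| ≤ ε} has aperture at most arcsin(ε/ε₀) around x₁ - x₂). -/

import Mathlib

/-!
If `‖u - s • w‖ ≤ ε < ‖u‖` with `s > 0`, then `s • w` lies in the ball of radius `ε` around `u`,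
which does not contain `0`. By the law of sines in the triangle `0, u, s • w`, the distance from
`u` to `s • w` is at least `‖u‖ sin θ`, where `θ` is the angle between `w` and `u`; and the
angle is acute since `s • w` is closer to `u` than `0` is. Hence `sin θ ≤ ε / ‖u‖ ≤ ε / ε₀`.
-/

open RealInnerProductSpace InnerProductGeometry

namespace InnerProductGeometry

variable {V : Type*} [NormedAddCommGroup V] [InnerProductSpace ℝ V]

theorem sin_angle_mul_norm_le_norm_sub (x y : V) : Real.sin (angle x y) * ‖x‖ ≤ ‖x - y‖ := by
  rw [sin_angle_mul_norm_eq_sin_angle_mul_norm]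
  exact mul_le_of_le_one_left (norm_nonneg _) (Real.sin_le_one _)

theorem inner_pos_of_norm_sub_lt_norm {x y : V} (h : ‖x - y‖ < ‖x‖) : 0 < ⟪x, y⟫ := by
  have hsq : ‖x - y‖ ^ 2 < ‖x‖ ^ 2 := by gcongr
  rw [norm_sub_sq_real] at hsq
  nlinarith [sq_nonneg ‖y‖]

theorem angle_le_pi_div_two_of_inner_nonneg {x y : V} (h : 0 ≤ ⟪x, y⟫) :
    angle x y ≤ Real.pi / 2 :=
  Real.arccos_le_pi_div_two.2 (div_nonneg h (by positivity))

theorem angle_le_arcsin_of_norm_sub_le {x y : V} {r : ℝ} (h : ‖x - y‖ ≤ r) (hr : r < ‖x‖) :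
    angle y x ≤ Real.arcsin (r / ‖x‖) := by
  have hx : 0 < ‖x‖ := (norm_nonneg _).trans_lt (h.trans_lt hr)
  have hacute : angle y x ≤ Real.pi / 2 := by
    rw [angle_comm]
    exact angle_le_pi_div_two_of_inner_nonneg (inner_pos_of_norm_sub_lt_norm (h.trans_lt hr)).le
  rw [Real.le_arcsin_iff_sin_le' ⟨by linarith [angle_nonneg y x, Real.pi_pos], hacute⟩,
    le_div_iff₀ hx, angle_comm]
  exact (sin_angle_mul_norm_le_norm_sub x y).trans h

end InnerProductGeometry

theorem recollision_cone {d : ℕ} (ε ε₀ : ℝ) (hε : 0 < ε) (hεε₀ : ε < ε₀)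
    (x₁ x₂ v₁ : EuclideanSpace ℝ (Fin d)) (hx : ε₀ ≤ ‖x₁ - x₂‖) :
    {v₂ : EuclideanSpace ℝ (Fin d) |
        ∃ s : ℝ, 0 < s ∧ ‖x₁ - x₂ - s • (v₁ - v₂)‖ ≤ ε} ⊆
      {v₂ : EuclideanSpace ℝ (Fin d) |
        v₁ - v₂ ≠ 0 ∧ angle (v₁ - v₂) (x₁ - x₂) ≤ Real.arcsin (ε / ε₀)} := by
  rintro v₂ ⟨s, hs, hle⟩
  have hlt : ε < ‖x₁ - x₂‖ := hεε₀.trans_le hx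
  refine ⟨fun hw => ?_, ?_⟩
  · rw [hw, smul_zero, sub_zero] at hle
    linarith
  calc angle (v₁ - v₂) (x₁ - x₂) = angle (s • (v₁ - v₂)) (x₁ - x₂) :=
        (angle_smul_left_of_pos _ _ hs).symm
    _ ≤ Real.arcsin (ε / ‖x₁ - x₂‖) := angle_le_arcsin_of_norm_sub_le hle hlt
    _ ≤ Real.arcsin (ε / ε₀) :=
        Real.arcsin_le_arcsin (div_le_div_of_nonneg_left hε.le (hε.trans hεε₀) hx)
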